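/- Let B = (b_1, …, b_n) ∈ ℝ^{m×n} be a basis, let β ≥ 1, and let 1 ≤ d < n. If B_{[d+1,n]} is β-SVP-reduced and λ_1(L(B)) < λ_1(L(B_{[1,d]})), then ‖b*_{d+1}‖ ≤ β·λ_1(L(B)). -/

import Mathlib

noncomputable section

/-- Euclidean space `ℝ^m`. -/
abbrev Euc (m : ℕ) : Type := EuclideanSpace ℝ (Fin m)

variable {m : ℕ}

/-- `projGS B s` is the orthogonal projection `π_{s+1}` onto the subspace orthogonal to
`b_1, …, b_s` (0-based: orthogonal to `B 0, …, B (s-1)`). -/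
def projGS (B : ℕ → Euc m) (s : ℕ) (x : Euc m) : Euc m :=
  (Submodule.orthogonalProjectionOnto ((Submodule.span ℝ (B '' Set.Iio s))ᗮ) x : Euc m)

/-- The Gram–Schmidt vector `b*_{i+1}` (0-based index `i`). -/
def gsoVec (B : ℕ → Euc m) (i : ℕ) : Euc m := projGS B i (B i)

/-- The projected block `B_{[s+1, s+ℓ]}` (0-based start `s`; the length is supplied
separately to the predicates below). -/
def block (B : ℕ → Euc m) (s : ℕ) : ℕ → Euc m := fun t => projGS B s (B (s + t))

/-- Gram matrix of the first `ℓ` vectors. -/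
def gram (B : ℕ → Euc m) (ℓ : ℕ) : Matrix (Fin ℓ) (Fin ℓ) ℝ :=
  Matrix.of fun i j => (inner ℝ (B i) (B j) : ℝ)

/-- `vol(L(B)) = det(BᵀB)^{1/2}` for the first `ℓ` vectors. -/
def volB (B : ℕ → Euc m) (ℓ : ℕ) : ℝ := Real.sqrt (gram B ℓ).det

/-- The lattice generated by the first `ℓ` vectors. -/
def latticeSpan (B : ℕ → Euc m) (ℓ : ℕ) : Submodule ℤ (Euc m) :=
  Submodule.span ℤ (B '' Set.Iio ℓ)

/-- `λ₁(L)`: the minimum norm of a nonzero lattice vector. -/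
def lambda1 (L : Submodule ℤ (Euc m)) : ℝ :=
  sInf {r : ℝ | ∃ x ∈ L, x ≠ 0 ∧ ‖x‖ = r}

/-- `B` (of rank `ℓ`) is `δ`-SVP-reduced. -/
def SVPReduced (δ : ℝ) (B : ℕ → Euc m) (ℓ : ℕ) : Prop :=
  ‖B 0‖ ≤ δ * lambda1 (latticeSpan B ℓ)

/-- `B` (of rank `ℓ`) is `δ`-HSVP-reduced. -/
def HSVPReduced (δ : ℝ) (B : ℕ → Euc m) (ℓ : ℕ) : Prop :=
  ‖B 0‖ ≤ δ * volB B ℓ ^ ((1 : ℝ) / ℓ)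

/-- The dual basis `B^× = B (BᵀB)⁻¹` of the first `ℓ` vectors (extended by `0`). -/
def dualFam (B : ℕ → Euc m) (ℓ : ℕ) : ℕ → Euc m := fun i =>
  if h : i < ℓ then ∑ j : Fin ℓ, ((gram B ℓ)⁻¹ j ⟨i, h⟩) • B j else 0

/-- The reversed dual basis `B^{-s}`. -/
def revDual (B : ℕ → Euc m) (ℓ : ℕ) : ℕ → Euc m := fun i => dualFam B ℓ (ℓ - 1 - i)

/-- `B` (of rank `ℓ`) is `δ`-DHSVP-reduced: its reversed dual basis is `δ`-HSVP-reduced. -/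
def DHSVPReduced (δ : ℝ) (B : ℕ → Euc m) (ℓ : ℕ) : Prop :=
  HSVPReduced δ (revDual B ℓ) ℓ

/-- `B = (b_1, …, b_{d+1})` is `δ`-twin-reduced: `B_{[1,d]}` is `δ`-HSVP-reduced and
`B_{[2,d+1]}` is `δ`-DHSVP-reduced. -/
def TwinReduced (δ : ℝ) (B : ℕ → Euc m) (d : ℕ) : Prop :=
  HSVPReduced δ (block B 0) d ∧ DHSVPReduced δ (block B 1) d

/-- Gram–Schmidt coefficient `μ_{i,j}` (0-based). -/
def mu (B : ℕ → Euc m) (i j : ℕ) : ℝ :=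
  (inner ℝ (B i) (gsoVec B j) : ℝ) / ‖gsoVec B j‖ ^ 2

/-- The first `ℓ` vectors are size-reduced. -/
def SizeReduced (B : ℕ → Euc m) (ℓ : ℕ) : Prop :=
  ∀ i j, j < i → i < ℓ → |mu B i j| ≤ 1 / 2

/-- The first `ℓ` vectors are `ε`-LLL-reduced. -/
def LLLReduced (ε : ℝ) (B : ℕ → Euc m) (ℓ : ℕ) : Prop :=
  SizeReduced B ℓ ∧
    ∀ i, 0 < i → i < ℓ →
      ‖gsoVec B (i - 1)‖ ^ 2 ≤ (1 + ε) * ‖mu B i (i - 1) • gsoVec B (i - 1) + gsoVec B i‖ ^ 2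

/-- `B` (of rank `ℓ`) is `δ`-DSVP-reduced: its reversed dual basis is `δ`-SVP-reduced
and `B` is `(1/3)`-LLL-reduced. -/
def DSVPReduced (δ : ℝ) (B : ℕ → Euc m) (ℓ : ℕ) : Prop :=
  SVPReduced δ (revDual B ℓ) ℓ ∧ LLLReduced (1 / 3) B ℓ

/-- `γ` is an admissible Hermite bound for rank `r`: every lattice generated by `r`
linearly independent vectors of a Euclidean space satisfies `λ₁² ≤ γ · vol^{2/r}`. -/
def IsHermiteBound (γ : ℝ) (r : ℕ) : Prop :=
  ∀ (m' : ℕ) (v : ℕ → Euc m'), LinearIndependent ℝ (fun i : Fin r => v i) →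
    lambda1 (latticeSpan v r) ^ 2 ≤ γ * volB v r ^ ((2 : ℝ) / r)

/-!
Let `v` be a shortest nonzero vector of `L(B)` and project it by `π_{d+1}`. Since
`‖v‖ < λ₁(L(B_{[1,d]}))`, `v` does not lie in `L(B_{[1,d]})`, which by linear independence is
`L(B) ∩ span(b_1, …, b_d)`; hence `π_{d+1}(v)` is a nonzero vector of `L(B_{[d+1,n]})` of norm
at most `‖v‖`. So `λ₁(L(B_{[d+1,n]})) ≤ λ₁(L(B))`, while `b*_{d+1}` is the first vector of the
`β`-SVP-reduced block `B_{[d+1,n]}`.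
-/

open Submodule Set

theorem LinearIndepOn.mem_span_int_image_of_mem_span_image {ι E : Type*} [AddCommGroup E]
    [Module ℝ E] {v : ι → E} {s t : Set ι} (hv : LinearIndepOn ℝ v t) (hst : s ⊆ t) {x : E}
    (hx : x ∈ span ℤ (v '' t)) (hxs : x ∈ span ℝ (v '' s)) : x ∈ span ℤ (v '' s) := by
  obtain ⟨c, hct, rfl⟩ := (Finsupp.mem_span_image_iff_linearCombination ℤ).1 hx
  obtain ⟨r, hrs, hr⟩ := (Finsupp.mem_span_image_iff_linearCombination ℝ).1 hxs
  set cℝ : ι →₀ ℝ := c.mapRange Int.cast Int.cast_zero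
  have hcℝ : Finsupp.linearCombination ℝ v cℝ = Finsupp.linearCombination ℤ v c := by
    simp [cℝ, Finsupp.linearCombination_apply, Finsupp.sum_mapRange_index, Int.cast_smul_eq_zsmul]
  have hcℝt : cℝ ∈ Finsupp.supported ℝ ℝ t :=
    (Finsupp.mem_supported' ℝ _).2 fun i hi => by
      simp [cℝ, (Finsupp.mem_supported' ℤ c).1 hct i hi]
  have hcr : cℝ = r := linearIndepOn_iffₛ.1 hv cℝ hcℝt r
    (Finsupp.supported_mono hst hrs) (hcℝ.trans hr.symm)
  have hcs : c ∈ Finsupp.supported ℤ ℤ s := fun i hi =>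
    hrs (by simpa [← hcr, cℝ] using hi)
  exact (Finsupp.mem_span_image_iff_linearCombination ℤ).2 ⟨c, hcs, rfl⟩

lemma projGS_eq_starProjection (B : ℕ → Euc m) (s : ℕ) :
    projGS B s = (span ℝ (B '' Iio s))ᗮ.starProjection := rfl

lemma projGS_eq_zero_iff {B : ℕ → Euc m} {s : ℕ} {x : Euc m} :
    projGS B s x = 0 ↔ x ∈ span ℝ (B '' Iio s) := by
  rw [projGS_eq_starProjection, starProjection_apply_eq_zero_iff, orthogonal_orthogonal]

lemma norm_projGS_le (B : ℕ → Euc m) (s : ℕ) (x : Euc m) : ‖projGS B s x‖ ≤ ‖x‖ :=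
  norm_starProjection_apply_le _ x

lemma block_zero (B : ℕ → Euc m) : block B 0 = B := by
  funext t
  simp [block, projGS_eq_starProjection, starProjection_eq_self_iff]

lemma gsoVec_eq_block_apply_zero (B : ℕ → Euc m) (d : ℕ) : gsoVec B d = block B d 0 := rfl

lemma projGS_mem_latticeSpan_block {B : ℕ → Euc m} {n s : ℕ} {x : Euc m}
    (hx : x ∈ latticeSpan B n) : projGS B s x ∈ latticeSpan (block B s) (n - s) := by
  let π : Euc m →ₗ[ℤ] Euc m :=
    ((span ℝ (B '' Iio s))ᗮ.starProjection : Euc m →ₗ[ℝ] Euc m).restrictScalars ℤ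
  suffices latticeSpan B n ≤ (latticeSpan (block B s) (n - s)).comap π from this hx
  refine span_le.2 ?_
  rintro _ ⟨j, hj, rfl⟩
  change projGS B s (B j) ∈ latticeSpan (block B s) (n - s)
  rcases lt_or_ge j s with hjs | hsj
  · rw [projGS_eq_zero_iff.2 (subset_span ⟨j, hjs, rfl⟩)]
    exact zero_mem _
  · exact subset_span ⟨j - s, by simp only [mem_Iio] at hj ⊢; omega,
      by rw [block, Nat.add_sub_cancel' hsj]⟩

lemma lambda1_le_norm {L : Submodule ℤ (Euc m)} {x : Euc m} (hx : x ∈ L) (hx0 : x ≠ 0) :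
    lambda1 L ≤ ‖x‖ :=
  csInf_le ⟨0, by rintro _ ⟨y, -, -, rfl⟩; positivity⟩ ⟨x, hx, hx0, rfl⟩

lemma lambda1_le_of_forall_norm_lt {L L' : Submodule ℤ (Euc m)} {c : ℝ}
    (hL : ∃ x ∈ L, x ≠ 0) (hc : lambda1 L < c)
    (h : ∀ x ∈ L, x ≠ 0 → ‖x‖ < c → ∃ y ∈ L', y ≠ 0 ∧ ‖y‖ ≤ ‖x‖) :
    lambda1 L' ≤ lambda1 L := by
  by_contra! hlt
  obtain ⟨x₀, hx₀, hx₀0⟩ := hL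
  obtain ⟨_, ⟨x, hx, hx0, rfl⟩, hxlt⟩ :=
    exists_lt_of_csInf_lt (s := {r | ∃ x ∈ L, x ≠ 0 ∧ ‖x‖ = r}) ⟨‖x₀‖, x₀, hx₀, hx₀0, rfl⟩
      (lt_min hlt hc)
  obtain ⟨y, hy, hy0, hyx⟩ := h x hx hx0 (hxlt.trans_le (min_le_right _ _))
  have := lambda1_le_norm hy hy0
  linarith [hxlt.trans_le (min_le_left _ _)]

lemma lambda1_block_le_of_lt_lambda1 {B : ℕ → Euc m} {n d : ℕ} (hdn : d < n)
    (hB : LinearIndepOn ℝ B (Iio n))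
    (hgap : lambda1 (latticeSpan B n) < lambda1 (latticeSpan B d)) :
    lambda1 (latticeSpan (block B d) (n - d)) ≤ lambda1 (latticeSpan B n) := by
  refine lambda1_le_of_forall_norm_lt
    ⟨B d, subset_span ⟨d, hdn, rfl⟩, hB.ne_zero (mem_Iio.2 hdn)⟩ hgap ?_
  intro x hx hx0 hxlt
  refine ⟨projGS B d x, projGS_mem_latticeSpan_block hx, fun h0 => ?_, norm_projGS_le B d x⟩
  have hxd : x ∈ latticeSpan B d := hB.mem_span_int_image_of_mem_span_image
    (Iio_subset_Iio hdn.le) hx (projGS_eq_zero_iff.1 h0)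
  exact (lambda1_le_norm hxd hx0).not_gt hxlt

theorem gso_le_of_svp_block_general {m n d : ℕ} (hdn : d < n) {β : ℝ} (hβ : 1 ≤ β)
    (B : ℕ → Euc m) (hB : LinearIndependent ℝ (fun i : Fin n => B i))
    (hblock : SVPReduced β (block B d) (n - d))
    (hgap : lambda1 (latticeSpan B n) < lambda1 (latticeSpan (block B 0) d)) :
    ‖gsoVec B d‖ ≤ β * lambda1 (latticeSpan B n) := by
  have hB' : LinearIndepOn ℝ B (Iio n) := hB.comp _ Fin.equivSubtype.symm.injective
  rw [block_zero] at hgap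
  calc ‖gsoVec B d‖ = ‖block B d 0‖ := by rw [gsoVec_eq_block_apply_zero]
    _ ≤ β * lambda1 (latticeSpan (block B d) (n - d)) := hblock
    _ ≤ β * lambda1 (latticeSpan B n) :=
      mul_le_mul_of_nonneg_left (lambda1_block_le_of_lt_lambda1 hdn hB' hgap) (by linarith)

/-- if `B_{[d+1,n]}` is `β`-SVP-reduced and `λ₁(L(B)) < λ₁(L(B_{[1,d]}))`,
then `‖b*_{d+1}‖ ≤ β λ₁(L(B))`. -/
theorem gso_le_of_svp_block {m n d : ℕ} (hd1 : 1 ≤ d) (hdn : d < n) {β : ℝ} (hβ : 1 ≤ β)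
    (B : ℕ → Euc m) (hB : LinearIndependent ℝ (fun i : Fin n => B i))
    (hblock : SVPReduced β (block B d) (n - d))
    (hgap : lambda1 (latticeSpan B n) < lambda1 (latticeSpan (block B 0) d)) :
    ‖gsoVec B d‖ ≤ β * lambda1 (latticeSpan B n) :=
  gso_le_of_svp_block_general hdn hβ B hB hblock hgap

end
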